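/- arXiv:1812.06704 — 3 statements merged into one kernel-verified Lean document; each statement's English description precedes it below -/
import Mathlib

section
/- Every bounded continuous complex function on X with uniform radial limits at infinity is uniformly continuous on X; in particular, for any family S of linear subspaces of X, the algebra E_S(X) is contained in the C*-algebra of bounded uniformly continuous functions on X. -/
open MeasureTheory Metric Filter Topology

noncomputable section

/-- `X d` is the Euclidean space `ℝ^d` with its standard inner product and norm. -/
abbrev X (d : ℕ) : Type := EuclideanSpace ℝ (Fin d)

/-- `h` is a boundary function for `f` : `f` has uniform radial limits at infinity given
(on the unit sphere) by the continuous function `h`. -/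
def IsBoundary {E : Type*} [NormedAddCommGroup E] [InnerProductSpace ℝ E]
    (f : E → ℂ) (h : E → ℂ) : Prop :=
  Continuous h ∧
    ∀ ε > 0, ∃ r > 0, ∀ z : E, r ≤ ‖z‖ → ‖f z - h (‖z‖⁻¹ • z)‖ < ε

/-- `f` has uniform radial limits at infinity. -/
def HasUniformRadialLimits {E : Type*} [NormedAddCommGroup E] [InnerProductSpace ℝ E]
    (f : E → ℂ) : Prop :=
  ∃ h : E → ℂ, IsBoundary f h

/-- The generating set of the algebra `E_S(X)` : functions of the form `g ∘ π_Y` with `Y ∈ S`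
and `g` a bounded continuous function on `Y^⊥` having uniform radial limits at infinity. -/
def projGen {E : Type*} [NormedAddCommGroup E] [InnerProductSpace ℝ E]
    [FiniteDimensional ℝ E] (S : Set (Submodule ℝ E)) :
    Set (BoundedContinuousFunction E ℂ) :=
  { f | ∃ Y ∈ S, ∃ g : BoundedContinuousFunction (↥Yᗮ) ℂ,
      HasUniformRadialLimits ⇑g ∧ ∀ x : E, f x = g (Submodule.orthogonalProjectionOnto Yᗮ x) }

/-- `E_S(X)` : the smallest closed unital *-subalgebra of `C_b(X)` containing all `g ∘ π_Y`
with `Y ∈ S` and `g` having uniform radial limits at infinity. -/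
def ES {E : Type*} [NormedAddCommGroup E] [InnerProductSpace ℝ E]
    [FiniteDimensional ℝ E] (S : Set (Submodule ℝ E)) :
    StarSubalgebra ℂ (BoundedContinuousFunction E ℂ) :=
  (StarAlgebra.adjoin ℂ (projGen S)).topologicalClosure

/-! Off a large closed ball `f` is uniformly close to `h ∘ normalize`, which is uniformly
continuous there: `normalize` is `2/r`-Lipschitz outside the ball of radius `r` and `h` is
uniformly continuous on the compact unit sphere. Near the ball, `f` is uniformly continuous by
Heine–Cantor. For `E_S`, bounded uniformly continuous functions form a closed star subalgebra
which contains every generator `g ∘ π_Y`, since `π_Y` is linear. -/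

open NormedSpace BoundedContinuousFunction
open scoped NNReal

theorem Continuous.uniformContinuous_of_forall_dist_lt_off_compact {α β : Type*}
    [PseudoMetricSpace α] [PseudoMetricSpace β] {f : α → β} (hf : Continuous f)
    (h : ∀ ε > 0, ∃ K, IsCompact K ∧
      ∃ δ > 0, ∀ x ∉ K, ∀ y ∉ K, dist x y < δ → dist (f x) (f y) < ε) :
    UniformContinuous f := by
  rw [Metric.uniformContinuous_iff]
  intro ε hε
  obtain ⟨K, hK, δ, hδ, hfar⟩ := h ε hε
  obtain ⟨δ', hδ', hnear⟩ := Metric.mem_uniformity_dist.1 <|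
    hK.uniformContinuousAt_of_continuousAt f (fun _ _ ↦ hf.continuousAt)
      (Metric.dist_mem_uniformity hε)
  refine ⟨min δ δ', lt_min hδ hδ', fun {x y} hxy ↦ ?_⟩
  by_cases hx : x ∈ K
  · exact hnear (hxy.trans_le (min_le_right _ _)) hx
  by_cases hy : y ∈ K
  · rw [dist_comm] at hxy ⊢
    exact hnear (hxy.trans_le (min_le_right _ _)) hy
  exact hfar x hx y hy (hxy.trans_le (min_le_left _ _))

section Normalize

variable {V : Type*} [NormedAddCommGroup V] [NormedSpace ℝ V]

theorem NormedSpace.norm_normalize_sub_normalize_le {x : V} (hx : x ≠ 0) (y : V) :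
    ‖normalize x - normalize y‖ ≤ 2 * ‖x - y‖ / ‖x‖ := by
  have hx' : 0 < ‖x‖ := norm_pos_iff.2 hx
  have hsplit : normalize x - normalize y = ‖x‖⁻¹ • (x - y) + (‖x‖⁻¹ - ‖y‖⁻¹) • y := by
    simp only [normalize, smul_sub, sub_smul]
    abel
  have hradial : ‖(‖x‖⁻¹ - ‖y‖⁻¹) • y‖ ≤ ‖x - y‖ / ‖x‖ := by
    rcases eq_or_ne y 0 with rfl | hy
    · simp only [smul_zero, norm_zero]
      positivity
    have hy' : 0 < ‖y‖ := norm_pos_iff.2 hy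
    have : (‖x‖⁻¹ - ‖y‖⁻¹) * ‖y‖ = (‖y‖ - ‖x‖) / ‖x‖ := by field_simp
    rw [norm_smul, Real.norm_eq_abs, ← abs_of_pos hy', ← abs_mul, abs_of_pos hy', this, abs_div,
      abs_of_pos hx']
    gcongr
    rw [abs_sub_comm]
    exact abs_norm_sub_norm_le x y
  calc ‖normalize x - normalize y‖
      ≤ ‖‖x‖⁻¹ • (x - y)‖ + ‖(‖x‖⁻¹ - ‖y‖⁻¹) • y‖ := hsplit ▸ norm_add_le _ _
    _ ≤ ‖x - y‖ / ‖x‖ + ‖x - y‖ / ‖x‖ := by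
        gcongr
        rw [norm_smul, norm_inv, norm_norm, inv_mul_eq_div]
    _ = 2 * ‖x - y‖ / ‖x‖ := by ring

theorem NormedSpace.lipschitzOnWith_normalize {r : ℝ≥0} (hr : 0 < r) :
    LipschitzOnWith (2 / r) normalize {x : V | r ≤ ‖x‖} := by
  refine LipschitzOnWith.of_dist_le_mul fun x hx y _ ↦ ?_
  have hx0 : x ≠ 0 := norm_pos_iff.1 ((NNReal.coe_pos.2 hr).trans_le hx)
  rw [dist_eq_norm, dist_eq_norm, NNReal.coe_div, NNReal.coe_ofNat, div_mul_eq_mul_div]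
  exact (norm_normalize_sub_normalize_le hx0 y).trans (by gcongr; exact hx)

theorem Continuous.uniformContinuousOn_comp_normalize [ProperSpace V] {β : Type*}
    [UniformSpace β] {h : V → β} (hh : Continuous h) {r : ℝ≥0} (hr : 0 < r) :
    UniformContinuousOn (h ∘ normalize) {x : V | r ≤ ‖x‖} :=
  ((isCompact_sphere 0 1).uniformContinuousOn_of_continuous hh.continuousOn).comp
    (lipschitzOnWith_normalize hr).uniformContinuousOn fun _ hx ↦
      mem_sphere_zero_iff_norm.2 <|
        norm_normalize (norm_pos_iff.1 ((NNReal.coe_pos.2 hr).trans_le hx))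

end Normalize

theorem IsBoundary.uniformContinuous {E : Type*} [NormedAddCommGroup E]
    [InnerProductSpace ℝ E] [ProperSpace E] {f h : E → ℂ} (hf : Continuous f)
    (hb : IsBoundary f h) : UniformContinuous f := by
  refine hf.uniformContinuous_of_forall_dist_lt_off_compact fun ε hε ↦ ?_
  obtain ⟨r, hr, hfh⟩ := hb.2 (ε / 3) (by positivity)
  obtain ⟨δ, hδ, hhδ⟩ := Metric.uniformContinuousOn_iff.1
    (hb.1.uniformContinuousOn_comp_normalize (r := ⟨r, hr.le⟩) hr) (ε / 3) (by positivity)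
  refine ⟨closedBall 0 r, isCompact_closedBall 0 r, δ, hδ, fun x hx y hy hxy ↦ ?_⟩
  rw [mem_closedBall_zero_iff, not_le] at hx hy
  calc dist (f x) (f y)
      ≤ dist (f x) (h (normalize x)) + dist (h (normalize x)) (h (normalize y))
        + dist (h (normalize y)) (f y) := dist_triangle4 _ _ _ _
    _ < ε / 3 + ε / 3 + ε / 3 := by
        gcongr
        · exact (dist_eq_norm _ _).trans_lt (hfh x hx.le)
        · exact hhδ x hx.le y hy.le hxy
        · exact (dist_comm _ _).trans_lt <| (dist_eq_norm _ _).trans_lt (hfh y hy.le)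
    _ = ε := by ring

namespace BoundedContinuousFunction

variable {α : Type*} [UniformSpace α]

theorem isClosed_setOf_uniformContinuous {β : Type*} [PseudoMetricSpace β] :
    IsClosed {f : α →ᵇ β | UniformContinuous f} := by
  refine isClosed_of_closure_subset fun f hf ↦
    uniformContinuous_of_uniform_approx_of_uniformContinuous fun u hu ↦ ?_
  obtain ⟨ε, hε, hεu⟩ := Metric.mem_uniformity_dist.1 hu
  obtain ⟨g, hg, hfg⟩ := Metric.mem_closure_iff.1 hf ε hε
  exact ⟨g, hg, fun y ↦ hεu ((dist_coe_le_dist y).trans_lt hfg)⟩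

theorem uniformContinuous_mul {R : Type*} [NonUnitalSeminormedRing R] [ProperSpace R]
    {f g : α →ᵇ R} (hf : UniformContinuous f) (hg : UniformContinuous g) :
    UniformContinuous ⇑(f * g) := by
  set C := max ‖f‖ ‖g‖
  have hmul :
      UniformContinuousOn (fun p : R × R ↦ p.1 * p.2) (closedBall 0 C ×ˢ closedBall 0 C) :=
    ((isCompact_closedBall 0 C).prod (isCompact_closedBall 0 C)).uniformContinuousOn_of_continuous
      continuous_mul.continuousOn
  refine uniformContinuousOn_univ.1 (hmul.comp (hf.prodMk hg).uniformContinuousOn fun x _ ↦ ?_)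
  exact ⟨mem_closedBall_zero_iff.2 ((f.norm_coe_le_norm x).trans (le_max_left _ _)),
    mem_closedBall_zero_iff.2 ((g.norm_coe_le_norm x).trans (le_max_right _ _))⟩

variable (𝕜 : Type*) [RCLike 𝕜]

def uniformContinuousStarSubalgebra : StarSubalgebra 𝕜 (α →ᵇ 𝕜) where
  carrier := {f | UniformContinuous f}
  mul_mem' := uniformContinuous_mul
  add_mem' := UniformContinuous.add
  algebraMap_mem' _ := uniformContinuous_const
  star_mem' hf := star_isometry.uniformContinuous.comp hf

@[simp]
theorem mem_uniformContinuousStarSubalgebra {f : α →ᵇ 𝕜} :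
    f ∈ uniformContinuousStarSubalgebra 𝕜 ↔ UniformContinuous f :=
  Iff.rfl

theorem isClosed_uniformContinuousStarSubalgebra :
    IsClosed (uniformContinuousStarSubalgebra (α := α) 𝕜 : Set (α →ᵇ 𝕜)) :=
  isClosed_setOf_uniformContinuous

end BoundedContinuousFunction

theorem ES_le_uniformContinuousStarSubalgebra {E : Type*} [NormedAddCommGroup E]
    [InnerProductSpace ℝ E] [FiniteDimensional ℝ E] (S : Set (Submodule ℝ E)) :
    ES S ≤ uniformContinuousStarSubalgebra ℂ := by
  refine StarSubalgebra.topologicalClosure_minimal (StarAlgebra.adjoin_le ?_)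
    (isClosed_uniformContinuousStarSubalgebra ℂ)
  rintro f ⟨Y, -, g, ⟨h, hb⟩, hfg⟩
  rw [SetLike.mem_coe, mem_uniformContinuousStarSubalgebra,
    show ⇑f = g ∘ Yᗮ.orthogonalProjectionOnto from funext hfg]
  exact (hb.uniformContinuous g.continuous).comp
    (Yᗮ.orthogonalProjectionOnto).uniformContinuous

theorem uniformRadialLimits_uniformContinuous_general (d : ℕ) :
    (∀ f : BoundedContinuousFunction (X d) ℂ, HasUniformRadialLimits ⇑f →
      UniformContinuous ⇑f) ∧
    ∀ S : Set (Submodule ℝ (X d)), ∀ f ∈ ES S, UniformContinuous ⇑f :=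
  ⟨fun f ⟨_, hb⟩ ↦ hb.uniformContinuous f.continuous,
    fun S _ hf ↦ ES_le_uniformContinuousStarSubalgebra S hf⟩

/-- Every bounded continuous complex function on `X` with uniform radial limits at infinity
is uniformly continuous; in particular, for any family `S` of linear subspaces of `X`, the
algebra `E_S(X)` is contained in the C*-algebra of bounded uniformly continuous functions. -/
theorem uniformRadialLimits_uniformContinuous (d : ℕ) (hd : 1 ≤ d) :
    (∀ f : BoundedContinuousFunction (X d) ℂ, HasUniformRadialLimits ⇑f →
      UniformContinuous ⇑f) ∧
    ∀ S : Set (Submodule ℝ (X d)), ∀ f ∈ ES S, UniformContinuous ⇑f :=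
  uniformRadialLimits_uniformContinuous_general d
end
end

section
/- Let Y ⊆ X be a linear subspace, let g be a bounded continuous function on Y^⊥ with uniform radial limits at infinity, with boundary function h on the unit sphere of Y^⊥, and set f = g ∘ π_Y ∈ C_b(X). Let a ∈ X, a ≠ 0. Then: (1) if a ∈ Y, then f(x + ra) = f(x) for all x ∈ X and all r > 0; (2) if a ∉ Y, so that p := π_Y(a) ≠ 0, then for every compact subset C ⊆ X, sup_{x ∈ C} |f(x + ra) − h(p/‖p‖)| → 0 as r → +∞; that is, the translates of f converge, uniformly on compact sets, to the constant function h(p/‖p‖). -/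
/-!
Since `π_Y (x + r • a) = π_Y x + r • p`, the points `z = π_Y x + r • p` with `x` in a compact set
escape to infinity as `r → ∞`, while their directions, those of `r⁻¹ • π_Y x + p`, tend to
`p / ‖p‖`. The uniform radial limit and the continuity of `h` then give `g z → h (p / ‖p‖)`;
uniformity in `x ∈ C` is convergence along the product filter `atTop ×ˢ 𝓟 C`.
-/

open MeasureTheory Metric Filter Topology

noncomputable section

namespace IsBoundary

variable {E ι : Type*} [NormedAddCommGroup E] [InnerProductSpace ℝ E] {f h : E → ℂ}
  {l : Filter ι}

theorem tendsto_sub_comap_norm_atTop (hfh : IsBoundary f h) :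
    Tendsto (fun z => f z - h (‖z‖⁻¹ • z)) (comap norm atTop) (𝓝 0) := by
  refine Metric.tendsto_nhds.2 fun ε hε => ?_
  obtain ⟨r, -, hr⟩ := hfh.2 ε hε
  filter_upwards [tendsto_comap.eventually (eventually_ge_atTop r)] with z hz
  simpa [dist_eq_norm] using hr z hz

theorem tendsto_comp {z : ι → E} {u : E} (hfh : IsBoundary f h)
    (hz : Tendsto (fun i => ‖z i‖) l atTop) (hdir : Tendsto (fun i => ‖z i‖⁻¹ • z i) l (𝓝 u)) :
    Tendsto (fun i => f (z i)) l (𝓝 (h u)) := by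
  have := (hfh.tendsto_sub_comap_norm_atTop.comp (tendsto_comap_iff.2 hz)).add
    ((hfh.1.tendsto u).comp hdir)
  simpa using this

theorem tendsto_smul (hfh : IsBoundary f h) {p : E} (hp : p ≠ 0) {s : ι → ℝ} {w : ι → E}
    (hs : Tendsto s l atTop) (hw : Tendsto w l (𝓝 p)) :
    Tendsto (fun i => f (s i • w i)) l (𝓝 (h (‖p‖⁻¹ • p))) := by
  refine hfh.tendsto_comp ?_ ?_
  · refine (hs.atTop_mul_pos (norm_pos_iff.2 hp) hw.norm).congr' ?_
    filter_upwards [hs.eventually_ge_atTop 0] with i hi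
    rw [norm_smul, Real.norm_of_nonneg hi]
  · have hdir : ContinuousAt (fun v : E => ‖v‖⁻¹ • v) p :=
      (continuous_norm.continuousAt.inv₀ (norm_ne_zero_iff.2 hp)).smul continuousAt_id
    refine (hdir.tendsto.comp hw).congr' ?_
    filter_upwards [hs.eventually_gt_atTop 0] with i hi
    rw [Function.comp_apply, norm_smul, Real.norm_of_nonneg hi.le, smul_smul, mul_inv,
      mul_right_comm, inv_mul_cancel₀ hi.ne', one_mul]

theorem tendsto_add_smul (hfh : IsBoundary f h) {p : E} (hp : p ≠ 0) {q : ι → E}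
    (hq : IsBoundedUnder (· ≤ ·) l (‖q ·‖)) :
    Tendsto (fun ri : ℝ × ι => f (q ri.2 + ri.1 • p)) (atTop ×ˢ l) (𝓝 (h (‖p‖⁻¹ • p))) := by
  obtain ⟨M, hM⟩ := hq
  have hw : Tendsto (fun ri : ℝ × ι => ri.1⁻¹ • q ri.2 + p) (atTop ×ˢ l) (𝓝 p) := by
    simpa using ((tendsto_inv_atTop_zero.comp tendsto_fst).zero_smul_isBoundedUnder_le
      (isBoundedUnder_of_eventually_le (tendsto_snd.eventually (eventually_map.1 hM)))).add_const p
  refine (hfh.tendsto_smul hp tendsto_fst hw).congr' ?_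
  filter_upwards [tendsto_fst.eventually (eventually_ne_atTop 0)] with ri hr
  rw [smul_add, smul_inv_smul₀ hr, add_comm]

end IsBoundary

theorem Submodule.orthogonalProjectionOnto_orthogonal_eq_zero_iff {𝕜 E : Type*} [RCLike 𝕜]
    [NormedAddCommGroup E] [InnerProductSpace 𝕜 E] {K : Submodule 𝕜 E} [K.HasOrthogonalProjection]
    {v : E} :
    Kᗮ.orthogonalProjectionOnto v = 0 ↔ v ∈ K := by
  rw [orthogonalProjectionOnto_eq_zero_iff, orthogonal_orthogonal]

theorem translates_of_projected_function_general (d : ℕ) (Y : Submodule ℝ (X d))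
    (g : BoundedContinuousFunction (↥Yᗮ) ℂ) (h : ↥Yᗮ → ℂ) (hgh : IsBoundary ⇑g h)
    (a : X d) :
    (a ∈ Y → ∀ (x : X d) (r : ℝ), 0 < r →
      g (Submodule.orthogonalProjectionOnto Yᗮ (x + r • a)) = g (Submodule.orthogonalProjectionOnto Yᗮ x)) ∧
    (a ∉ Y → Submodule.orthogonalProjectionOnto Yᗮ a ≠ 0 ∧
      ∀ C : Set (X d), IsCompact C → ∀ ε > (0 : ℝ), ∃ r₀ : ℝ, ∀ r ≥ r₀, ∀ x ∈ C,
        ‖g (Submodule.orthogonalProjectionOnto Yᗮ (x + r • a)) -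
          h (‖(Submodule.orthogonalProjectionOnto Yᗮ a : ↥Yᗮ)‖⁻¹ • Submodule.orthogonalProjectionOnto Yᗮ a)‖ < ε) := by
  set P := Submodule.orthogonalProjectionOnto Yᗮ
  refine ⟨fun haY x r _ => ?_, fun haY => ?_⟩
  · rw [map_add, map_smul, Submodule.orthogonalProjectionOnto_orthogonal_eq_zero_iff.2 haY,
      smul_zero, add_zero]
  have hp : P a ≠ 0 := Submodule.orthogonalProjectionOnto_orthogonal_eq_zero_iff.not.2 haY
  refine ⟨hp, fun C hC ε hε => ?_⟩
  obtain ⟨M, hM⟩ := hC.exists_bound_of_continuousOn P.continuous.continuousOn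
  have hlim := hgh.tendsto_add_smul hp (l := 𝓟 C) (q := fun x => P x)
    (isBoundedUnder_of_eventually_le (eventually_principal.2 hM))
  obtain ⟨r₀, hr₀⟩ :=
    eventually_atTop.1 (eventually_prod_principal_iff.1 (Metric.tendsto_nhds.1 hlim ε hε))
  refine ⟨r₀, fun r hr x hx => ?_⟩
  simpa [dist_eq_norm, P] using hr₀ r hr x hx

/-- Let `Y ⊆ X` be a linear subspace, `g` bounded continuous on `Y^⊥` with uniform radial
limits at infinity given by the boundary function `h`, and `f = g ∘ π_Y`. Let `a ≠ 0`.
(1) If `a ∈ Y` then `f(x + ra) = f(x)` for all `x` and all `r > 0`.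
(2) If `a ∉ Y` then `p := π_Y(a) ≠ 0`, and the translates `x ↦ f(x + ra)` converge, uniformly
on compact subsets of `X` as `r → +∞`, to the constant `h(p/‖p‖)`. -/
theorem translates_of_projected_function (d : ℕ) (hd : 1 ≤ d) (Y : Submodule ℝ (X d))
    (g : BoundedContinuousFunction (↥Yᗮ) ℂ) (h : ↥Yᗮ → ℂ) (hgh : IsBoundary ⇑g h)
    (a : X d) (ha : a ≠ 0) :
    (a ∈ Y → ∀ (x : X d) (r : ℝ), 0 < r →
      g (Submodule.orthogonalProjectionOnto Yᗮ (x + r • a)) = g (Submodule.orthogonalProjectionOnto Yᗮ x)) ∧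
    (a ∉ Y → Submodule.orthogonalProjectionOnto Yᗮ a ≠ 0 ∧
      ∀ C : Set (X d), IsCompact C → ∀ ε > (0 : ℝ), ∃ r₀ : ℝ, ∀ r ≥ r₀, ∀ x ∈ C,
        ‖g (Submodule.orthogonalProjectionOnto Yᗮ (x + r • a)) -
          h (‖(Submodule.orthogonalProjectionOnto Yᗮ a : ↥Yᗮ)‖⁻¹ • Submodule.orthogonalProjectionOnto Yᗮ a)‖ < ε) :=
  translates_of_projected_function_general d Y g h hgh a
end
end

section
/- Let S be a family of linear subspaces of X with {0} ∈ S, let a ∈ X, a ≠ 0, and let τ_a : E_S(X) → E_S(X) be the homomorphism sending f to the limit of the translates f(· + ra), uniformly on compact sets, as r → +∞. Let χ be a character of E_S(X) (a nonzero continuous unital *-homomorphism to ℂ). Then the following are equivalent: (a) χ vanishes on ker τ_a (equivalently χ ∘ τ_a = χ); (b) χ(f) = h_f(a/‖a‖) for every f ∈ C(X̄), where h_f is the boundary function of f; (c) for every Y ∈ S with a ∉ Y and every g ∈ C(overline{Y^⊥}) with boundary function h_g, one has χ(g ∘ π_Y) = h_g(π_Y(a)/‖π_Y(a)‖). -/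
open MeasureTheory Metric Filter Topology

noncomputable section

/-- The translates `x ↦ f(x + ra)` converge to `g` uniformly on compact subsets of `X`
as `r → +∞`. -/
def TranslatesTendTo {d : ℕ} (a : X d) (f g : BoundedContinuousFunction (X d) ℂ) : Prop :=
  ∀ C : Set (X d), IsCompact C →
    TendstoUniformlyOn (fun (r : ℝ) (x : X d) => f (x + r • a)) (fun x => g x) atTop C

/-!
Translating a function with boundary function `h` along the ray `r • a` drives it to the constant
`h (a / ‖a‖)`; translating a generator `g ∘ π_Y` drives it to `h_g (π_Y a / ‖π_Y a‖)` when
`a ∉ Y`, and leaves it unchanged when `a ∈ Y`. Hence (a) gives (b), and (c) says exactly that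
the characters `χ ∘ τ_a` and `χ` agree on the generators of `E_S(X)`; being continuous star
homomorphisms of a C⋆-algebra, they then agree everywhere. Taking `Y = {0}` turns (c) into (b).
For (b) ⇒ (c), multiply `g ∘ π_Y` by a function `φ ∈ C(X̄)` whose boundary function is `1` at
`a / ‖a‖` and vanishes near the directions in `Y`: the product lies in `C(X̄)`, and `χ φ = 1`.
-/

open NormedSpace (normalize_smul_of_pos)
open scoped BoundedContinuousFunction

section Boundary

variable {E V : Type*} [NormedAddCommGroup E] [InnerProductSpace ℝ E]
  [NormedAddCommGroup V] [InnerProductSpace ℝ V]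

theorem IsBoundary.tendsto_comp_s16 {g h : E → ℂ} (hgh : IsBoundary g h) {α : Type*} {l : Filter α}
    {u : α → E} (hu : Tendsto (fun i => ‖u i‖) l atTop) {ω : E}
    (hω : Tendsto (fun i => NormedSpace.normalize (u i)) l (𝓝 ω)) :
    Tendsto (fun i => g (u i)) l (𝓝 (h ω)) := by
  have hdiff : Tendsto (fun i => g (u i) - h (NormedSpace.normalize (u i))) l (𝓝 0) := by
    refine NormedAddGroup.tendsto_nhds_zero.2 fun ε hε => ?_
    obtain ⟨r, -, hr⟩ := hgh.2 ε hε
    filter_upwards [hu.eventually_ge_atTop r] with i hi using hr _ hi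
  simpa using hdiff.add ((hgh.1.tendsto ω).comp hω)

theorem IsBoundary.tendsto_add_smul_s16 {g h : E → ℂ} (hgh : IsBoundary g h) (w : E) {b : E}
    (hb : b ≠ 0) :
    Tendsto (fun r : ℝ => g (w + r • b)) atTop (𝓝 (h (NormedSpace.normalize b))) := by
  have hv : Tendsto (fun r : ℝ => r⁻¹ • w + b) atTop (𝓝 b) := by
    simpa using ((tendsto_inv_atTop_zero (𝕜 := ℝ)).smul_const w).add_const b
  have hray : ∀ᶠ r : ℝ in atTop, 0 < r ∧ w + r • b = r • (r⁻¹ • w + b) := by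
    filter_upwards [eventually_gt_atTop 0] with r hr
    exact ⟨hr, by rw [smul_add, smul_inv_smul₀ hr.ne']⟩
  refine hgh.tendsto_comp_s16 ?_ ?_
  · refine (tendsto_id.atTop_mul_pos (norm_pos_iff.2 hb) hv.norm).congr' ?_
    filter_upwards [hray] with r ⟨hr, hwr⟩
    rw [hwr, norm_smul, Real.norm_of_nonneg hr.le]
    rfl
  · have hcont : ContinuousAt NormedSpace.normalize b :=
      (continuousAt_id.norm.inv₀ (norm_ne_zero_iff.2 hb)).smul continuousAt_id
    refine (hcont.tendsto.comp hv).congr' ?_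
    filter_upwards [hray] with r ⟨hr, hwr⟩
    rw [hwr, normalize_smul_of_pos hr]
    rfl

theorem IsBoundary.comp_subtypeVal {f h : E → ℂ} (hfh : IsBoundary f h) (K : Submodule ℝ E) :
    IsBoundary (fun v : K => f v) (fun v : K => h v) := by
  refine ⟨hfh.1.comp continuous_subtype_val, fun ε hε => ?_⟩
  obtain ⟨r, hr, hfr⟩ := hfh.2 ε hε
  exact ⟨r, hr, fun v hv => hfr v hv⟩

theorem isBoundary_comp_smul_inv_max {F : E → ℂ} (hF : Continuous F) :
    IsBoundary (fun x => F ((max ‖x‖ 1)⁻¹ • x)) F :=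
  ⟨hF, fun ε hε => ⟨1, one_pos, fun z hz => by simpa [max_eq_left hz] using hε⟩⟩

theorem continuous_inv_max_norm_smul {c : ℝ} (hc : 0 < c) :
    Continuous fun v : V => (max ‖v‖ c)⁻¹ • v :=
  ((continuous_norm.max continuous_const).inv₀
    fun _ => (hc.trans_le (le_max_right _ _)).ne').smul continuous_id

/-- On the support of `κ`, `(max ‖v‖ c)⁻¹ • v` is `normalize v`, but unlike `normalize` it is
continuous on all of `V`. -/
theorem IsBoundary.mul_cutoff {g h : V → ℂ} (hgh : IsBoundary g h) (P : E →L[ℝ] V) {c : ℝ}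
    (hc : 0 < c) {κ : E → ℂ} (hκ : Continuous κ) (hκ_le : ∀ x, ‖κ x‖ ≤ 1)
    (hκ_zero : ∀ x, ‖P x‖ ≤ c → κ x = 0) :
    IsBoundary (fun x => g (P x) * κ ((max ‖x‖ 1)⁻¹ • x))
      (fun x => h ((max ‖P x‖ c)⁻¹ • P x) * κ x) := by
  refine ⟨?_, fun ε hε => ?_⟩
  · exact (hgh.1.comp ((continuous_inv_max_norm_smul hc).comp P.continuous)).mul hκ
  obtain ⟨r, hr, hgr⟩ := hgh.2 ε hε
  refine ⟨max 1 (r / c), lt_max_of_lt_left one_pos, fun z hz => ?_⟩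
  have hz1 : 1 ≤ ‖z‖ := (le_max_left _ _).trans hz
  have hz0 : 0 < ‖z‖ := one_pos.trans_le hz1
  dsimp only
  rw [max_eq_left hz1]
  rcases le_or_gt ‖P (‖z‖⁻¹ • z)‖ c with hPz | hPz
  · simpa [hκ_zero _ hPz] using hε
  have hPz_norm : ‖P (‖z‖⁻¹ • z)‖ = ‖z‖⁻¹ * ‖P z‖ := by
    rw [map_smul, norm_smul, Real.norm_of_nonneg (inv_nonneg.2 hz0.le)]
  have hrPz : r ≤ ‖P z‖ := by
    have : r ≤ ‖z‖ * c := (div_le_iff₀ hc).1 ((le_max_right _ _).trans hz)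
    rw [hPz_norm, lt_inv_mul_iff₀ hz0] at hPz
    linarith
  have hdir : (max ‖P (‖z‖⁻¹ • z)‖ c)⁻¹ • P (‖z‖⁻¹ • z) = NormedSpace.normalize (P z) := by
    rw [max_eq_left hPz.le, map_smul]
    exact normalize_smul_of_pos (inv_pos.2 hz0) _
  calc ‖g (P z) * κ (‖z‖⁻¹ • z) - h ((max ‖P (‖z‖⁻¹ • z)‖ c)⁻¹ • P (‖z‖⁻¹ • z)) *
        κ (‖z‖⁻¹ • z)‖
      = ‖g (P z) - h (NormedSpace.normalize (P z))‖ * ‖κ (‖z‖⁻¹ • z)‖ := by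
        rw [hdir, ← sub_mul, norm_mul]
    _ ≤ ‖g (P z) - h (NormedSpace.normalize (P z))‖ :=
        mul_le_of_le_one_right (norm_nonneg _) (hκ_le _)
    _ < ε := hgr _ hrPz

theorem coe_orthogonalProjectionOnto_orthogonal_bot (x : E) :
    ((⊥ : Submodule ℝ E)ᗮ.orthogonalProjectionOnto x : E) = x :=
  Submodule.starProjection_eq_self_iff.2 (by simp)

end Boundary

section ES

variable {E : Type*} [NormedAddCommGroup E] [InnerProductSpace ℝ E] [FiniteDimensional ℝ E]
  {S : Set (Submodule ℝ E)}

theorem isClosed_ES (S : Set (Submodule ℝ E)) : IsClosed (ES S : Set (E →ᵇ ℂ)) :=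
  StarSubalgebra.isClosed_topologicalClosure _

theorem orthogonalProjectionOnto_orthogonal_eq_zero_iff {Y : Submodule ℝ E} {a : E} :
    Yᗮ.orthogonalProjectionOnto a = 0 ↔ a ∈ Y := by
  rw [Submodule.orthogonalProjectionOnto_eq_zero_iff, Submodule.orthogonal_orthogonal]

theorem mem_ES_of_isBoundary (h0 : ⊥ ∈ S) {f : E →ᵇ ℂ} {h : E → ℂ} (hfh : IsBoundary f h) :
    f ∈ ES S := by
  refine StarSubalgebra.le_topologicalClosure _ (StarAlgebra.subset_adjoin ℂ _ ?_)
  refine ⟨⊥, h0, f.compContinuous ⟨Subtype.val, continuous_subtype_val⟩,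
    ⟨_, hfh.comp_subtypeVal _⟩, fun x => ?_⟩
  exact congrArg f (coe_orthogonalProjectionOnto_orthogonal_bot x).symm

def EvaluatesBoundaryAt (χ : WeakDual.characterSpace ℂ (ES S)) (a : E) : Prop :=
  ∀ (f : ES S) (h : E → ℂ), IsBoundary (⇑(f : E →ᵇ ℂ)) h → χ f = h (NormedSpace.normalize a)

def EvaluatesProjBoundaryAt (χ : WeakDual.characterSpace ℂ (ES S)) (a : E) : Prop :=
  ∀ Y ∈ S, a ∉ Y → ∀ (g : Yᗮ →ᵇ ℂ) (h : Yᗮ → ℂ), IsBoundary ⇑g h → ∀ f : ES S,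
    (∀ x : E, (f : E →ᵇ ℂ) x = g (Yᗮ.orthogonalProjectionOnto x)) →
    χ f = h (NormedSpace.normalize (Yᗮ.orthogonalProjectionOnto a))

theorem EvaluatesProjBoundaryAt.evaluatesBoundaryAt (h0 : ⊥ ∈ S)
    {χ : WeakDual.characterSpace ℂ (ES S)} {a : E} (ha : a ≠ 0)
    (hc : EvaluatesProjBoundaryAt χ a) : EvaluatesBoundaryAt χ a := by
  intro f h hfh
  rw [hc ⊥ h0 (by simpa using ha) ((f : E →ᵇ ℂ).compContinuous ⟨_, continuous_subtype_val⟩) _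
    (hfh.comp_subtypeVal _) f
    fun x => congrArg (f : E →ᵇ ℂ) (coe_orthogonalProjectionOnto_orthogonal_bot x).symm]
  change h (NormedSpace.normalize ((⊥ : Submodule ℝ E)ᗮ.orthogonalProjectionOnto a : E)) = _
  rw [coe_orthogonalProjectionOnto_orthogonal_bot]

theorem EvaluatesBoundaryAt.evaluatesProjBoundaryAt (h0 : ⊥ ∈ S)
    {χ : WeakDual.characterSpace ℂ (ES S)} {a : E}
    (hb : EvaluatesBoundaryAt χ a) : EvaluatesProjBoundaryAt χ a := by
  intro Y _ haY g h hgh f hfg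
  set P := Yᗮ.orthogonalProjectionOnto
  have hPa : P (NormedSpace.normalize a) = ‖a‖⁻¹ • P a := map_smul P _ _
  have ha : a ≠ 0 := fun ha => haY (ha ▸ Y.zero_mem)
  set δ := ‖P (NormedSpace.normalize a)‖
  have hδ : 0 < δ := by
    rw [norm_pos_iff, hPa]
    exact smul_ne_zero (inv_ne_zero (norm_ne_zero_iff.2 ha))
      (mt orthogonalProjectionOnto_orthogonal_eq_zero_iff.1 haY)
  obtain ⟨κ, hκ_zero, hκ_one, hκ_mem⟩ := exists_continuous_zero_one_of_isClosed
    (isClosed_le (continuous_norm.comp P.continuous) continuous_const) isClosed_singleton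
    (Set.disjoint_singleton_right.2 (not_le.2 (half_lt_self hδ)) :
      Disjoint {x : E | ‖P x‖ ≤ δ / 2} {NormedSpace.normalize a})
  set κ' : E → ℂ := fun x => (κ x : ℂ)
  have hκ'_cont : Continuous κ' := Complex.continuous_ofReal.comp κ.continuous
  have hκ'_le (x : E) : ‖κ' x‖ ≤ 1 := by
    rw [Complex.norm_real, Real.norm_of_nonneg (hκ_mem x).1]
    exact (hκ_mem x).2
  have hκ'_one : κ' (NormedSpace.normalize a) = 1 := by simp [κ', hκ_one rfl]
  let Φ : E →ᵇ ℂ := .ofNormedAddCommGroup (fun x => κ' ((max ‖x‖ 1)⁻¹ • x))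
    (hκ'_cont.comp (continuous_inv_max_norm_smul one_pos)) 1 fun x => hκ'_le _
  have hΦ : IsBoundary Φ κ' := isBoundary_comp_smul_inv_max hκ'_cont
  have hΦ_mem : Φ ∈ ES S := mem_ES_of_isBoundary h0 hΦ
  have hχΦ : χ ⟨Φ, hΦ_mem⟩ = 1 := (hb _ _ hΦ).trans hκ'_one
  have hfΦ : IsBoundary ⇑((f * ⟨Φ, hΦ_mem⟩ : ES S) : E →ᵇ ℂ)
      (fun x => h ((max ‖P x‖ (δ / 2))⁻¹ • P x) * κ' x) := by
    convert hgh.mul_cutoff P (half_pos hδ) hκ'_cont hκ'_le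
      (fun x hx => by simp [κ', hκ_zero hx]) using 1
    ext x
    simp [Φ, hfg]
  calc χ f = χ (f * ⟨Φ, hΦ_mem⟩) := by rw [map_mul, hχΦ, mul_one]
    _ = h ((max δ (δ / 2))⁻¹ • P (NormedSpace.normalize a)) * κ' (NormedSpace.normalize a) :=
      hb _ _ hfΦ
    _ = h (NormedSpace.normalize (P a)) := by
      rw [max_eq_left (half_le_self hδ.le), hκ'_one, mul_one]
      change h (NormedSpace.normalize (P (NormedSpace.normalize a))) = _
      rw [hPa, normalize_smul_of_pos (inv_pos.2 (norm_pos_iff.2 ha))]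

end ES

section Translation

variable {d : ℕ} {S : Set (Submodule ℝ (X d))} {a : X d} {τ : ES S →⋆ₐ[ℂ] ES S}

theorem tau_apply_of_tendsto (hτ : ∀ f : ES S, TranslatesTendTo a f (τ f)) {f : ES S}
    {u : X d → ℂ}
    (hu : ∀ x, Tendsto (fun r : ℝ => (f : X d →ᵇ ℂ) (x + r • a)) atTop (𝓝 (u x))) (x : X d) :
    (τ f : X d →ᵇ ℂ) x = u x :=
  tendsto_nhds_unique ((hτ f {x} isCompact_singleton).tendsto_at rfl) (hu x)

theorem tau_eq_algebraMap_of_tendsto (hτ : ∀ f : ES S, TranslatesTendTo a f (τ f)) {f : ES S}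
    {c : ℂ} (hc : ∀ x, Tendsto (fun r : ℝ => (f : X d →ᵇ ℂ) (x + r • a)) atTop (𝓝 c)) :
    τ f = algebraMap ℂ (ES S) c :=
  Subtype.ext <| BoundedContinuousFunction.ext fun x => by
    rw [tau_apply_of_tendsto hτ hc x]
    simp

theorem evaluatesBoundaryAt_of_ker_tau (hτ : ∀ f : ES S, TranslatesTendTo a f (τ f))
    (ha : a ≠ 0) {χ : WeakDual.characterSpace ℂ (ES S)} (hker : ∀ f : ES S, τ f = 0 → χ f = 0) :
    EvaluatesBoundaryAt χ a := by
  intro f h hfh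
  have hτf := tau_eq_algebraMap_of_tendsto hτ fun x => hfh.tendsto_add_smul_s16 x ha
  have := hker (f - algebraMap ℂ _ (h (NormedSpace.normalize a)))
    (by rw [map_sub, hτf, AlgHomClass.commutes, sub_self])
  rwa [map_sub, AlgHomClass.commutes, Algebra.algebraMap_self_apply, sub_eq_zero] at this

theorem EvaluatesProjBoundaryAt.apply_tau_of_mem_projGen
    (hτ : ∀ f : ES S, TranslatesTendTo a f (τ f)) {χ : WeakDual.characterSpace ℂ (ES S)}
    (hc : EvaluatesProjBoundaryAt χ a) {f : ES S} (hf : (f : X d →ᵇ ℂ) ∈ projGen S) :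
    χ (τ f) = χ f := by
  obtain ⟨Y, hY, g, ⟨h, hgh⟩, hfg⟩ := hf
  by_cases haY : a ∈ Y
  · have hPa := orthogonalProjectionOnto_orthogonal_eq_zero_iff.2 haY
    have hτf : τ f = f := Subtype.ext <| BoundedContinuousFunction.ext <|
      tau_apply_of_tendsto hτ fun x => tendsto_const_nhds.congr fun r => by simp [hfg, hPa]
    rw [hτf]
  · have hb := mt orthogonalProjectionOnto_orthogonal_eq_zero_iff.1 haY
    rw [tau_eq_algebraMap_of_tendsto hτ fun x => by
        simpa [hfg] using hgh.tendsto_add_smul_s16 (Yᗮ.orthogonalProjectionOnto x) hb,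
      AlgHomClass.commutes, hc Y hY haY g h hgh f hfg]
    rfl

open scoped CStarAlgebra in
theorem EvaluatesProjBoundaryAt.apply_tau (hτ : ∀ f : ES S, TranslatesTendTo a f (τ f))
    {χ : WeakDual.characterSpace ℂ (ES S)} (hc : EvaluatesProjBoundaryAt χ a) (f : ES S) :
    χ (τ f) = χ f := by
  -- makes `ES S` a C⋆-algebra, so that `χ` is a star homomorphism and `τ` is continuous
  have hES_closed := isClosed_ES S
  let χ' : ES S →⋆ₐ[ℂ] ℂ := χ
  have hχτ : χ'.comp τ = χ' :=
    StarAlgHom.ext_topologicalClosure (map_continuous _) (map_continuous _)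
      (StarAlgHom.ext_adjoin fun _ hx => hc.apply_tau_of_mem_projGen hτ hx)
  exact DFunLike.congr_fun hχτ f

end Translation

theorem character_vanishing_on_ker_tau_tfae_general (d : ℕ)
    (S : Set (Submodule ℝ (X d))) (h0 : (⊥ : Submodule ℝ (X d)) ∈ S)
    (a : X d) (ha : a ≠ 0)
    (τ : ↥(ES S) →⋆ₐ[ℂ] ↥(ES S))
    (hτ : ∀ f : ↥(ES S), TranslatesTendTo a (↑f) (↑(τ f)))
    (χ : WeakDual.characterSpace ℂ ↥(ES S)) :
    ((∀ f : ↥(ES S), τ f = 0 → χ f = 0) ↔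
      (∀ (f : ↥(ES S)) (h : X d → ℂ),
        IsBoundary (⇑(f : BoundedContinuousFunction (X d) ℂ)) h → χ f = h (‖a‖⁻¹ • a))) ∧
    ((∀ (f : ↥(ES S)) (h : X d → ℂ),
        IsBoundary (⇑(f : BoundedContinuousFunction (X d) ℂ)) h → χ f = h (‖a‖⁻¹ • a)) ↔
      (∀ Y ∈ S, a ∉ Y → ∀ (g : BoundedContinuousFunction (↥Yᗮ) ℂ) (h : ↥Yᗮ → ℂ),
        IsBoundary ⇑g h → ∀ f : ↥(ES S),
          (∀ x : X d, (f : BoundedContinuousFunction (X d) ℂ) x =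
            g (Submodule.orthogonalProjectionOnto Yᗮ x)) →
          χ f = h (‖(Submodule.orthogonalProjectionOnto Yᗮ a : ↥Yᗮ)‖⁻¹ • Submodule.orthogonalProjectionOnto Yᗮ a))) := by
  refine ⟨⟨evaluatesBoundaryAt_of_ker_tau hτ ha, fun hb f hf => ?_⟩,
    ⟨EvaluatesBoundaryAt.evaluatesProjBoundaryAt h0,
      EvaluatesProjBoundaryAt.evaluatesBoundaryAt h0 ha⟩⟩
  rw [← (EvaluatesBoundaryAt.evaluatesProjBoundaryAt h0 hb).apply_tau hτ f, hf, map_zero]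

/-- Let `S` be a family of subspaces of `X` with `{0} ∈ S`, `a ≠ 0`, `τ = τ_a` the
homomorphism sending `f ∈ E_S(X)` to the limit of its translates `f(· + ra)` (uniformly on
compact sets, as `r → +∞`), and let `χ` be a character of `E_S(X)`. The following are
equivalent:
(a) `χ` vanishes on `ker τ_a`;
(b) `χ(f) = h_f(a/‖a‖)` for every `f ∈ C(X̄)` (with boundary function `h_f`);
(c) for every `Y ∈ S` with `a ∉ Y` and every `g ∈ C(overline{Y^⊥})` with boundary function
`h_g`, one has `χ(g ∘ π_Y) = h_g(π_Y(a)/‖π_Y(a)‖)`. -/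
theorem character_vanishing_on_ker_tau_tfae (d : ℕ) (hd : 1 ≤ d)
    (S : Set (Submodule ℝ (X d))) (h0 : (⊥ : Submodule ℝ (X d)) ∈ S)
    (a : X d) (ha : a ≠ 0)
    (τ : ↥(ES S) →⋆ₐ[ℂ] ↥(ES S))
    (hτ : ∀ f : ↥(ES S), TranslatesTendTo a (↑f) (↑(τ f)))
    (χ : WeakDual.characterSpace ℂ ↥(ES S)) :
    ((∀ f : ↥(ES S), τ f = 0 → χ f = 0) ↔
      (∀ (f : ↥(ES S)) (h : X d → ℂ),
        IsBoundary (⇑(f : BoundedContinuousFunction (X d) ℂ)) h → χ f = h (‖a‖⁻¹ • a))) ∧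
    ((∀ (f : ↥(ES S)) (h : X d → ℂ),
        IsBoundary (⇑(f : BoundedContinuousFunction (X d) ℂ)) h → χ f = h (‖a‖⁻¹ • a)) ↔
      (∀ Y ∈ S, a ∉ Y → ∀ (g : BoundedContinuousFunction (↥Yᗮ) ℂ) (h : ↥Yᗮ → ℂ),
        IsBoundary ⇑g h → ∀ f : ↥(ES S),
          (∀ x : X d, (f : BoundedContinuousFunction (X d) ℂ) x =
            g (Submodule.orthogonalProjectionOnto Yᗮ x)) →
          χ f = h (‖(Submodule.orthogonalProjectionOnto Yᗮ a : ↥Yᗮ)‖⁻¹ • Submodule.orthogonalProjectionOnto Yᗮ a))) :=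
  character_vanishing_on_ker_tau_tfae_general d S h0 a ha τ hτ χ
end
end
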